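/- arXiv:1202.3524 — 3 statements merged into one kernel-verified Lean document; each statement's English description precedes it below -/
import Mathlib

section
/- The order ≺_{s,m} on leading pairs is a strictly well-founded partial order: there is no infinite strictly descending chain (s_n, m_n) with, for each n, some monomial λ such that λ·s_{n+1} = s_n and λ·m_{n+1} <_m m_n. -/
/-! Adding the module part `s = λ·e_i` of a leading pair to its monomial part `m` gives a
weight `λ + m` that strictly decreases along `≺_{s,m}`: multiplying by the monomial
relating two pairs can only increase a monomial in an admissible order. Any such order
contains the divisibility order on `ℕⁿ`, which is a well-quasi-order by Dickson's lemma,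
so its strict part is well-founded and so is `≺_{s,m}`. -/

def StrictPart {α : Type*} (r : α → α → Prop) (a b : α) : Prop :=
  r a b ∧ ¬ r b a

namespace StrictPart

variable {α : Type*} {r : α → α → Prop} [IsPreorder α r] {a b c : α}

theorem trans_rel (hab : StrictPart r a b) (hbc : r b c) : StrictPart r a c :=
  ⟨trans_of r hab.1 hbc, fun hca => hab.2 (trans_of r hbc hca)⟩

theorem rel_trans (hab : r a b) (hbc : StrictPart r b c) : StrictPart r a c :=
  ⟨trans_of r hab hbc.1, fun hca => hbc.2 (trans_of r hca hab)⟩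

theorem add_left {M : Type*} [Add M] [IsLeftCancelAdd M] {mle : M → M → Prop}
    [IsPartialOrder M mle] (hmadd : ∀ a b c : M, mle a b → mle (c + a) (c + b))
    {a b : M} (h : StrictPart mle a b) (c : M) : StrictPart mle (c + a) (c + b) := by
  refine ⟨hmadd a b c h.1, fun hba => h.2 ?_⟩
  rw [add_left_cancel (antisymm_of mle (hmadd a b c h.1) hba)]
  exact refl_of mle b

end StrictPart

section AdmissibleOrder

variable {M : Type*} {mle : M → M → Prop}

theorem rel_add_left_of_admissible [AddCommMonoid M] (hm0 : ∀ m : M, mle 0 m)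
    (hmadd : ∀ a b c : M, mle a b → mle (c + a) (c + b)) (a c : M) : mle a (c + a) := by
  simpa [add_comm] using hmadd 0 c a (hm0 c)

theorem wellQuasiOrdered_of_admissible [AddCommMonoid M] [Preorder M] [ExistsAddOfLE M]
    [WellQuasiOrderedLE M] (hm0 : ∀ m : M, mle 0 m)
    (hmadd : ∀ a b c : M, mle a b → mle (c + a) (c + b)) : WellQuasiOrdered mle := by
  intro f
  obtain ⟨i, j, hij, hle⟩ := wellQuasiOrdered_le f
  obtain ⟨c, hc⟩ := exists_add_of_le hle
  exact ⟨i, j, hij, hc ▸ add_comm c (f i) ▸ rel_add_left_of_admissible hm0 hmadd (f i) c⟩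

end AdmissibleOrder

section LeadingPair

variable {ι M : Type*} {mle : M → M → Prop}

/-- `≺_{s,m}` on leading pairs `((i, λ), m)`, where `(i, λ)` stands for the module monomial
`λ·e_i`. -/
def LeadingPairLT [Add M] (mle : M → M → Prop) (x y : (ι × M) × M) : Prop :=
  ∃ lam : M, (x.1.1, lam + x.1.2) = y.1 ∧ StrictPart mle (lam + x.2) y.2

def leadingPairWeight [Add M] (x : (ι × M) × M) : M :=
  x.1.2 + x.2

theorem leadingPairLT_trans [AddSemigroup M] [IsPreorder M mle]
    (hmadd : ∀ a b c : M, mle a b → mle (c + a) (c + b)) {x y z : (ι × M) × M}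
    (hxy : LeadingPairLT mle x y) (hyz : LeadingPairLT mle y z) : LeadingPairLT mle x z := by
  obtain ⟨l₁, hs₁, hm₁⟩ := hxy
  obtain ⟨l₂, hs₂, hm₂⟩ := hyz
  refine ⟨l₂ + l₁, by rw [← hs₂, ← hs₁, add_assoc], ?_⟩
  rw [add_assoc]
  exact StrictPart.rel_trans (hmadd _ _ l₂ hm₁.1) hm₂

theorem leadingPairWeight_strictPart [AddCancelCommMonoid M] [IsPartialOrder M mle]
    (hm0 : ∀ m : M, mle 0 m) (hmadd : ∀ a b c : M, mle a b → mle (c + a) (c + b))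
    {x y : (ι × M) × M} (h : LeadingPairLT mle x y) :
    StrictPart mle (leadingPairWeight x) (leadingPairWeight y) := by
  obtain ⟨lam, hs, hm⟩ := h
  have hy : y.1.2 = lam + x.1.2 := (congrArg Prod.snd hs).symm
  have hlow : mle (x.1.2 + x.2) (x.1.2 + (lam + x.2)) :=
    hmadd _ _ _ (rel_add_left_of_admissible hm0 hmadd _ _)
  have hhigh : mle (x.1.2 + y.2) (lam + x.1.2 + y.2) := by
    simpa only [add_assoc] using rel_add_left_of_admissible hm0 hmadd (x.1.2 + y.2) lam
  simp only [leadingPairWeight, hy]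
  exact StrictPart.rel_trans hlow ((hm.add_left hmadd _).trans_rel hhigh)

theorem wellFounded_leadingPairLT [AddCancelCommMonoid M] [Preorder M] [ExistsAddOfLE M]
    [WellQuasiOrderedLE M] [IsPartialOrder M mle] (hm0 : ∀ m : M, mle 0 m)
    (hmadd : ∀ a b c : M, mle a b → mle (c + a) (c + b)) :
    WellFounded (LeadingPairLT (ι := ι) mle) :=
  Subrelation.wf (leadingPairWeight_strictPart hm0 hmadd)
    (InvImage.wf leadingPairWeight (wellQuasiOrdered_of_admissible hm0 hmadd).wellFounded)

end LeadingPair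

/-- the order ≺_{s,m} on leading pairs (s, m) ∈ M_d × M,
defined by (s', m') ≺_{s,m} (s, m) iff ∃ λ, λ·s' = s and λ·m' <ₘ m, is a
strictly well-founded partial order: it is irreflexive, transitive and admits
no infinite strictly descending chain. -/
theorem precSM_strict_wellFounded {n d : ℕ}
    (mle : (Fin n → ℕ) → (Fin n → ℕ) → Prop)
    (hmlin : IsLinearOrder (Fin n → ℕ) mle)
    (hm0 : ∀ m : Fin n → ℕ, mle 0 m)
    (hmadd : ∀ a b c : Fin n → ℕ, mle a b → mle (c + a) (c + b)) :
    Irreflexive (fun x y : (Fin d × (Fin n → ℕ)) × (Fin n → ℕ) =>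
      ∃ lam : Fin n → ℕ, (x.1.1, lam + x.1.2) = y.1 ∧
        (mle (lam + x.2) y.2 ∧ ¬ mle y.2 (lam + x.2))) ∧
    Transitive (fun x y : (Fin d × (Fin n → ℕ)) × (Fin n → ℕ) =>
      ∃ lam : Fin n → ℕ, (x.1.1, lam + x.1.2) = y.1 ∧
        (mle (lam + x.2) y.2 ∧ ¬ mle y.2 (lam + x.2))) ∧
    ¬ ∃ f : ℕ → (Fin d × (Fin n → ℕ)) × (Fin n → ℕ),
      ∀ k : ℕ, ∃ lam : Fin n → ℕ, ((f (k+1)).1.1, lam + (f (k+1)).1.2) = (f k).1 ∧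
        (mle (lam + (f (k+1)).2) (f k).2 ∧ ¬ mle (f k).2 (lam + (f (k+1)).2)) := by
  have := hmlin
  have hwf : WellFounded (LeadingPairLT (ι := Fin d) mle) :=
    wellFounded_leadingPairLT hm0 hmadd
  refine ⟨hwf.irrefl.irrefl, fun _ _ _ => leadingPairLT_trans hmadd, ?_⟩
  rintro ⟨f, hf⟩
  exact (wellFounded_iff_isEmpty_descending_chain.1 hwf).false ⟨f, hf⟩
end

section
/- Compatibility lemma: suppose the admissible monomial order ≤_m and the admissible module order ≤_s are compatible, meaning σe_j ≤_s τe_j iff σ ≤_m τ. If (s₁, m₁) and (s₂, m₂) are leading pairs with s₁ | s₂ and m₁ | m₂ (componentwise divisibility in M_d and M respectively), then exactly one of the following holds: there is a monomial λ with λs₁ = s₂ and λm₁ = m₂ (so (s₁,m₁) super-divides (s₂,m₂)); or (s₁,m₁) ≺_{s,m} (s₂,m₂); or (s₁,m₁) ≺_{m,s} (s₂,m₂). -/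
/-! Write `s₂ = (s₁.1, σ + s₁.2)` and `m₂ = μ + m₁`; by cancellation these quotients are the only
possible multipliers `λ`. Translation invariance of `≤ₘ` reduces the three alternatives to
`σ = μ`, `σ <ₘ μ` and `μ <ₘ σ` (the last via compatibility, which turns the comparison of
`λ s₁` with `s₂` into one of `≤ₘ`), and exactly one of these holds in a linear order. -/

section LinearRelation

variable {α : Type*} {r : α → α → Prop} [IsLinearOrder α r]

theorem rel_add_right_iff [AddCancelCommMonoid α]
    (hadd : ∀ a b c : α, r a b → r (c + a) (c + b)) {a b c : α} :
    r (a + c) (b + c) ↔ r a b := by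
  refine ⟨fun h => ?_, fun h => by simpa only [add_comm c] using hadd a b c h⟩
  rcases total_of r a b with hab | hba
  · exact hab
  · have hba' : r (b + c) (a + c) := by simpa only [add_comm c] using hadd b a c hba
    obtain rfl : a = b := add_right_cancel (antisymm h hba')
    exact refl_of r a

theorem eq_or_strict_or_strict_exactly_one (a b : α) :
    (a = b ∨ (r a b ∧ ¬ r b a) ∨ (r b a ∧ ¬ r a b)) ∧
    ¬ (a = b ∧ (r a b ∧ ¬ r b a)) ∧ ¬ (a = b ∧ (r b a ∧ ¬ r a b)) ∧
    ¬ ((r a b ∧ ¬ r b a) ∧ (r b a ∧ ¬ r a b)) := by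
  have := total_of r a b
  have := refl_of r a
  have : r a b → r b a → a = b := antisymm
  grind

end LinearRelation

theorem compatibility_lemma_general {n d : ℕ}
    (mle : (Fin n → ℕ) → (Fin n → ℕ) → Prop)
    (sle : (Fin d × (Fin n → ℕ)) → (Fin d × (Fin n → ℕ)) → Prop)
    (hmlin : IsLinearOrder (Fin n → ℕ) mle)
    (hmadd : ∀ a b c : Fin n → ℕ, mle a b → mle (c + a) (c + b))
    (compat : ∀ (j : Fin d) (σ τ : Fin n → ℕ), sle (j, σ) (j, τ) ↔ mle σ τ)
    (s₁ s₂ : Fin d × (Fin n → ℕ)) (m₁ m₂ : Fin n → ℕ)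
    (hdivs : s₁.1 = s₂.1 ∧ ∃ c, s₁.2 + c = s₂.2)
    (hdivm : ∃ c, m₁ + c = m₂) :
    ((∃ lam : Fin n → ℕ, (s₁.1, lam + s₁.2) = s₂ ∧ lam + m₁ = m₂) ∨
     (∃ lam : Fin n → ℕ, (s₁.1, lam + s₁.2) = s₂ ∧
        (mle (lam + m₁) m₂ ∧ ¬ mle m₂ (lam + m₁))) ∨
     (∃ lam : Fin n → ℕ, lam + m₁ = m₂ ∧
        (sle (s₁.1, lam + s₁.2) s₂ ∧ ¬ sle s₂ (s₁.1, lam + s₁.2)))) ∧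
    ¬ ((∃ lam : Fin n → ℕ, (s₁.1, lam + s₁.2) = s₂ ∧ lam + m₁ = m₂) ∧
       (∃ lam : Fin n → ℕ, (s₁.1, lam + s₁.2) = s₂ ∧
          (mle (lam + m₁) m₂ ∧ ¬ mle m₂ (lam + m₁)))) ∧
    ¬ ((∃ lam : Fin n → ℕ, (s₁.1, lam + s₁.2) = s₂ ∧ lam + m₁ = m₂) ∧
       (∃ lam : Fin n → ℕ, lam + m₁ = m₂ ∧
          (sle (s₁.1, lam + s₁.2) s₂ ∧ ¬ sle s₂ (s₁.1, lam + s₁.2)))) ∧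
    ¬ ((∃ lam : Fin n → ℕ, (s₁.1, lam + s₁.2) = s₂ ∧
          (mle (lam + m₁) m₂ ∧ ¬ mle m₂ (lam + m₁))) ∧
       (∃ lam : Fin n → ℕ, lam + m₁ = m₂ ∧
          (sle (s₁.1, lam + s₁.2) s₂ ∧ ¬ sle s₂ (s₁.1, lam + s₁.2)))) := by
  obtain ⟨i, t⟩ := s₁
  obtain ⟨_, u⟩ := s₂
  obtain ⟨rfl, σ, rfl⟩ := hdivs
  obtain ⟨μ, rfl⟩ := hdivm
  have hquot (lam x c : Fin n → ℕ) : lam + x = x + c ↔ lam = c := by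
    rw [add_comm x, add_left_inj]
  simp only [Prod.mk.injEq, true_and, hquot, exists_eq_left, compat]
  simp only [add_comm m₁, add_comm t, rel_add_right_iff hmadd]
  exact eq_or_strict_or_strict_exactly_one σ μ

/-- compatibility lemma. If ≤ₘ and ≤ₛ are compatible admissible
orders and (s₁, m₁), (s₂, m₂) are leading pairs with s₁ | s₂ (in M_d) and
m₁ | m₂ (in M), then exactly one of the following holds: (s₁,m₁) super-divides
(s₂,m₂); (s₁,m₁) ≺_{s,m} (s₂,m₂); (s₁,m₁) ≺_{m,s} (s₂,m₂). -/
theorem compatibility_lemma {n d : ℕ}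
    (mle : (Fin n → ℕ) → (Fin n → ℕ) → Prop)
    (sle : (Fin d × (Fin n → ℕ)) → (Fin d × (Fin n → ℕ)) → Prop)
    (hmlin : IsLinearOrder (Fin n → ℕ) mle)
    (hm0 : ∀ m : Fin n → ℕ, mle 0 m)
    (hmadd : ∀ a b c : Fin n → ℕ, mle a b → mle (c + a) (c + b))
    (hslin : IsLinearOrder (Fin d × (Fin n → ℕ)) sle)
    (hs0 : ∀ (i : Fin d) (m : Fin n → ℕ), sle (i, 0) (i, m))
    (hsadd : ∀ (i : Fin d) (a b s : Fin n → ℕ),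
      sle (i, a) (i, b) → sle (i, s + a) (i, s + b))
    (compat : ∀ (j : Fin d) (σ τ : Fin n → ℕ), sle (j, σ) (j, τ) ↔ mle σ τ)
    (s₁ s₂ : Fin d × (Fin n → ℕ)) (m₁ m₂ : Fin n → ℕ)
    (hdivs : s₁.1 = s₂.1 ∧ ∃ c, s₁.2 + c = s₂.2)
    (hdivm : ∃ c, m₁ + c = m₂) :
    ((∃ lam : Fin n → ℕ, (s₁.1, lam + s₁.2) = s₂ ∧ lam + m₁ = m₂) ∨
     (∃ lam : Fin n → ℕ, (s₁.1, lam + s₁.2) = s₂ ∧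
        (mle (lam + m₁) m₂ ∧ ¬ mle m₂ (lam + m₁))) ∨
     (∃ lam : Fin n → ℕ, lam + m₁ = m₂ ∧
        (sle (s₁.1, lam + s₁.2) s₂ ∧ ¬ sle s₂ (s₁.1, lam + s₁.2)))) ∧
    ¬ ((∃ lam : Fin n → ℕ, (s₁.1, lam + s₁.2) = s₂ ∧ lam + m₁ = m₂) ∧
       (∃ lam : Fin n → ℕ, (s₁.1, lam + s₁.2) = s₂ ∧
          (mle (lam + m₁) m₂ ∧ ¬ mle m₂ (lam + m₁)))) ∧
    ¬ ((∃ lam : Fin n → ℕ, (s₁.1, lam + s₁.2) = s₂ ∧ lam + m₁ = m₂) ∧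
       (∃ lam : Fin n → ℕ, lam + m₁ = m₂ ∧
          (sle (s₁.1, lam + s₁.2) s₂ ∧ ¬ sle s₂ (s₁.1, lam + s₁.2)))) ∧
    ¬ ((∃ lam : Fin n → ℕ, (s₁.1, lam + s₁.2) = s₂ ∧
          (mle (lam + m₁) m₂ ∧ ¬ mle m₂ (lam + m₁))) ∧
       (∃ lam : Fin n → ℕ, lam + m₁ = m₂ ∧
          (sle (s₁.1, lam + s₁.2) s₂ ∧ ¬ sle s₂ (s₁.1, lam + s₁.2)))) :=
  compatibility_lemma_general mle sle hmlin hmadd compat s₁ s₂ m₁ m₂ hdivs hdivm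
end

section
/- Finiteness of the top-reduced S-Gröbner basis: if the admissible monomial order ≤_m and the admissible module order ≤_s are compatible, then the set of leading pairs of top-irreducible sig-polynomials (elements of SP* not top-reducible by any other element of SP*) is finite. Equivalently, the top-reduced S-Gröbner basis of SP is finite up to equivalence of sig-polynomials. -/
/-! Common setup: R = k[x₁,…,xₙ], monomials `Mo n = Fin n →₀ ℕ`, the monomial
monomodule `Md n d = Fin d × Mo n`, leading pairs `LP n d` (with `none` as the
polynomial part of a syzygy), sig-polynomials in `SP = {(u,p) : u·f = p}`,
and the orders ≺_{m,s}, ≺_{s,m} and super-divisibility on leading pairs. -/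

/-- Monomials in n variables. -/
abbrev Mo (n : ℕ) := Fin n →₀ ℕ

/-- The monomial monomodule M_d = { m·e_i }. -/
abbrev Md (n d : ℕ) := Fin d × Mo n

/-- Leading pairs: a signature together with either a leading monomial or
`none` (for syzygies, whose polynomial part is 0). -/
abbrev LP (n d : ℕ) := Md n d × Option (Mo n)

/-- Multiplication of a module monomial by a monomial. -/
noncomputable def smulMd {n d : ℕ} (lam : Mo n) (s : Md n d) : Md n d := (s.1, lam + s.2)

/-- `m` is the leading monomial of the polynomial `p` w.r.t. `mle`. -/
def IsLMp {k : Type*} [Field k] {n : ℕ} (mle : Mo n → Mo n → Prop)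
    (p : MvPolynomial (Fin n) k) (m : Mo n) : Prop :=
  m ∈ p.support ∧ ∀ m' ∈ p.support, mle m' m

/-- `s` is the signature (leading module monomial) of `u` w.r.t. `sle`. -/
def IsSig {k : Type*} [Field k] {n d : ℕ} (sle : Md n d → Md n d → Prop)
    (u : Fin d → MvPolynomial (Fin n) k) (s : Md n d) : Prop :=
  s.2 ∈ (u s.1).support ∧ ∀ (j : Fin d), ∀ m' ∈ (u j).support, sle (j, m') s

/-- `lp` is the leading pair LM(u, p) = (lm(u), lm(p)) of the sig-polynomial
`up`, with `none` as polynomial part when p = 0. -/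
def IsLP {k : Type*} [Field k] {n d : ℕ} (mle : Mo n → Mo n → Prop)
    (sle : Md n d → Md n d → Prop)
    (up : (Fin d → MvPolynomial (Fin n) k) × MvPolynomial (Fin n) k)
    (lp : LP n d) : Prop :=
  IsSig sle up.1 lp.1 ∧
    ((up.2 = 0 ∧ lp.2 = none) ∨ ∃ m, lp.2 = some m ∧ IsLMp mle up.2 m)

/-- Membership in SP: u·f = p. -/
def SPmem {k : Type*} [Field k] {n d : ℕ} (f : Fin d → MvPolynomial (Fin n) k)
    (up : (Fin d → MvPolynomial (Fin n) k) × MvPolynomial (Fin n) k) : Prop :=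
  ∑ i, up.1 i * f i = up.2

/-- The set LM(SP*) of leading pairs of nonzero sig-polynomials. -/
def LMSPstar {k : Type*} [Field k] {n d : ℕ} (mle : Mo n → Mo n → Prop)
    (sle : Md n d → Md n d → Prop) (f : Fin d → MvPolynomial (Fin n) k) :
    Set (LP n d) :=
  { lp | ∃ up, SPmem f up ∧ up ≠ 0 ∧ IsLP mle sle up lp }

/-- The set LM(NSP) of leading pairs of non-syzygy sig-polynomials. -/
def LMNSP {k : Type*} [Field k] {n d : ℕ} (mle : Mo n → Mo n → Prop)
    (sle : Md n d → Md n d → Prop) (f : Fin d → MvPolynomial (Fin n) k) :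
    Set (LP n d) :=
  { lp | ∃ up, SPmem f up ∧ up.2 ≠ 0 ∧ IsLP mle sle up lp }

/-- The order ≺_{m,s} on leading pairs: x ≺_{m,s} y iff ∃ λ, λ·mₓ = m_y and
λ·sₓ <ₛ s_y. -/
def precMS {n d : ℕ} (sle : Md n d → Md n d → Prop) (x y : LP n d) : Prop :=
  ∃ m m' lam, x.2 = some m' ∧ y.2 = some m ∧ lam + m' = m ∧
    (sle (smulMd lam x.1) y.1 ∧ ¬ sle y.1 (smulMd lam x.1))

/-- The order ≺_{s,m} on leading pairs (with the extension to syzygies):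
x ≺_{s,m} y iff ∃ λ, λ·sₓ = s_y and λ·mₓ <ₘ m_y; a syzygy leading pair is
below y iff its signature divides that of y. -/
def precSM {n d : ℕ} (mle : Mo n → Mo n → Prop) (x y : LP n d) : Prop :=
  (∃ m m' lam, x.2 = some m' ∧ y.2 = some m ∧ smulMd lam x.1 = y.1 ∧
    (mle (lam + m') m ∧ ¬ mle m (lam + m'))) ∨
  (x.2 = none ∧ (∃ m, y.2 = some m) ∧ ∃ lam : Mo n, smulMd lam x.1 = y.1)

/-- Super-divisibility of leading pairs: ∃ λ with λ·sₓ = s_y and λ·mₓ = m_y. -/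
def superdiv {n d : ℕ} (x y : LP n d) : Prop :=
  ∃ lam : Mo n, smulMd lam x.1 = y.1 ∧
    ((x.2 = none ∧ y.2 = none) ∨ ∃ m m', x.2 = some m' ∧ y.2 = some m ∧ lam + m' = m)

/-! Componentwise divisibility of leading pairs is a well-quasi-order by Dickson's lemma, and by
compatibility of the two orders a leading pair divisible by another one is top-reducible by it.
So the top-irreducible leading pairs form an antichain for this well-quasi-order, hence a finite
set. -/

instance WithBot.wellQuasiOrderedLE {α : Type*} [Preorder α] [WellQuasiOrderedLE α] :
    WellQuasiOrderedLE (WithBot α) := by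
  refine ⟨fun f => ?_⟩
  by_cases hbot : ∃ i, f i = ⊥
  · obtain ⟨i, hi⟩ := hbot
    exact ⟨i, i + 1, i.lt_succ_self, hi ▸ bot_le⟩
  · push Not at hbot
    choose g hg using fun i => WithBot.ne_bot_iff_exists.mp (hbot i)
    obtain ⟨i, j, hij, hle⟩ := wellQuasiOrdered_le g
    exact ⟨i, j, hij, hg i ▸ hg j ▸ WithBot.coe_le_coe.mpr hle⟩

theorem eq_or_strict_or_strict_of_isLinearOrder {α : Type*} {r : α → α → Prop}
    [IsLinearOrder α r] (a b : α) :
    a = b ∨ (r a b ∧ ¬ r b a) ∨ (r b a ∧ ¬ r a b) := by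
  by_cases hab : r a b <;> by_cases hba : r b a
  · exact Or.inl (antisymm hab hba)
  all_goals first | tauto | exact absurd (total_of r a b) (by tauto)

theorem strict_add_left_of_strict {M : Type*} [Add M] [IsLeftCancelAdd M] {r : M → M → Prop}
    [Std.Antisymm r] (hadd : ∀ a b c : M, r a b → r (c + a) (c + b)) {a b : M}
    (h : r a b ∧ ¬ r b a) (c : M) : r (c + a) (c + b) ∧ ¬ r (c + b) (c + a) := by
  refine ⟨hadd _ _ _ h.1, fun h' => h.2 ?_⟩
  obtain rfl := add_left_cancel (antisymm h' (hadd _ _ _ h.1))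
  exact h.1

/-- `|*` on leading pairs; the polynomial part `none` of a syzygy divides every polynomial part. -/
def LPDvd {n d : ℕ} (x y : LP n d) : Prop :=
  x.1.1 = y.1.1 ∧ x.1.2 ≤ y.1.2 ∧ ∀ m', x.2 = some m' → ∃ m, y.2 = some m ∧ m' ≤ m

theorem wellQuasiOrdered_lpDvd {n d : ℕ} : WellQuasiOrdered (LPDvd (n := n) (d := d)) := by
  have hkey :
      WellQuasiOrdered fun a b : (Mo n × WithBot (Mo n)) × Fin d => a.1 ≤ b.1 ∧ a.2 = b.2 :=
    wellQuasiOrdered_le.prod (Finite.wellQuasiOrdered _)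
  intro f
  obtain ⟨i, j, hij, ⟨hsig, hlm⟩, hidx⟩ := hkey fun i => (((f i).1.2, (f i).2), (f i).1.1)
  refine ⟨i, j, hij, hidx, hsig, fun m' hm' => ?_⟩
  rcases WithBot.le_def.mp hlm with h | ⟨a, b, hab, ha, hb⟩
  · exact absurd (hm'.symm.trans h) (Option.some_ne_none m')
  · exact ⟨b, hb, Option.some_injective _ (hm'.symm.trans ha) ▸ hab⟩

theorem precMS_or_precSM_or_superdiv_of_lpDvd {n d : ℕ}
    (mle : Mo n → Mo n → Prop) (sle : Md n d → Md n d → Prop) [IsLinearOrder (Mo n) mle]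
    (hmadd : ∀ a b c : Mo n, mle a b → mle (c + a) (c + b))
    (compat : ∀ (j : Fin d) (σ τ : Mo n), sle (j, σ) (j, τ) ↔ mle σ τ)
    {x y : LP n d} (hxy : LPDvd x y) :
    precMS sle x y ∨ precSM mle x y ∨ superdiv x y := by
  obtain ⟨⟨j, σ⟩, o⟩ := x
  obtain ⟨⟨j', τ⟩, o'⟩ := y
  obtain ⟨rfl, hστ, hlm⟩ := hxy
  obtain ⟨lam, rfl⟩ := exists_add_of_le hστ
  have hsig : smulMd lam (j, σ) = (j, σ + lam) := by rw [smulMd, add_comm]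
  cases o with
  | none =>
    cases o' with
    | none => exact Or.inr (Or.inr ⟨lam, hsig, Or.inl ⟨rfl, rfl⟩⟩)
    | some m => exact Or.inr (Or.inl (Or.inr ⟨rfl, ⟨m, rfl⟩, lam, hsig⟩))
  | some m' =>
    obtain ⟨m, rfl, hm⟩ := hlm m' rfl
    obtain ⟨mu, rfl⟩ := exists_add_of_le hm
    -- With `τ = σ + lam` and `m = m' + mu`, compare `lam` with `mu`: equality is super-divisibility,
    -- `lam < mu` is `≺_{s,m}`, and `mu < lam` is `≺_{m,s}` by compatibility.
    rcases eq_or_strict_or_strict_of_isLinearOrder (r := mle) lam mu with rfl | hlt | hgt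
    · exact Or.inr (Or.inr ⟨lam, hsig, Or.inr ⟨_, m', rfl, rfl, add_comm _ _⟩⟩)
    · refine Or.inr (Or.inl (Or.inl ⟨_, m', lam, rfl, rfl, hsig, ?_⟩))
      simpa only [add_comm lam m'] using strict_add_left_of_strict hmadd hlt m'
    · refine Or.inl ⟨_, m', mu, rfl, rfl, add_comm _ _, ?_⟩
      simpa only [smulMd, compat, add_comm mu σ] using strict_add_left_of_strict hmadd hgt σ

theorem topReduced_SGB_finite_general {k : Type*} [Field k] {n d : ℕ}
    (mle : Mo n → Mo n → Prop) (sle : Md n d → Md n d → Prop)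
    (hmlin : IsLinearOrder (Mo n) mle)
    (hmadd : ∀ a b c : Mo n, mle a b → mle (c + a) (c + b))
    (compat : ∀ (j : Fin d) (σ τ : Mo n), sle (j, σ) (j, τ) ↔ mle σ τ)
    (f : Fin d → MvPolynomial (Fin n) k) :
    {lp ∈ LMSPstar mle sle f | ∀ lp' ∈ LMSPstar mle sle f, lp' ≠ lp →
      ¬ (precMS sle lp' lp ∨ precSM mle lp' lp ∨ superdiv lp' lp)}.Finite := by
  refine IsAntichain.finite_of_wellQuasiOrdered ?_ wellQuasiOrdered_lpDvd
  rintro x hx y hy hne hdvd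
  exact hy.2 x hx.1 hne (precMS_or_precSM_or_superdiv_of_lpDvd mle sle hmadd compat hdvd)

/-- finiteness of the top-reduced S-Gröbner basis. If the
admissible orders ≤ₘ and ≤ₛ are compatible, then the set of leading pairs of
top-irreducible sig-polynomials (elements of SP* not top-reducible — via
≺_{m,s}, ≺_{s,m} or super-divisibility — by any other leading pair of SP*)
is finite. -/
theorem topReduced_SGB_finite {k : Type*} [Field k] {n d : ℕ}
    (mle : Mo n → Mo n → Prop) (sle : Md n d → Md n d → Prop)
    (hmlin : IsLinearOrder (Mo n) mle)
    (hm0 : ∀ m : Mo n, mle 0 m)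
    (hmadd : ∀ a b c : Mo n, mle a b → mle (c + a) (c + b))
    (hslin : IsLinearOrder (Md n d) sle)
    (hs0 : ∀ (i : Fin d) (m : Mo n), sle (i, 0) (i, m))
    (hsadd : ∀ (i : Fin d) (a b s : Mo n), sle (i, a) (i, b) → sle (i, s + a) (i, s + b))
    (compat : ∀ (j : Fin d) (σ τ : Mo n), sle (j, σ) (j, τ) ↔ mle σ τ)
    (f : Fin d → MvPolynomial (Fin n) k) :
    {lp ∈ LMSPstar mle sle f | ∀ lp' ∈ LMSPstar mle sle f, lp' ≠ lp →
      ¬ (precMS sle lp' lp ∨ precSM mle lp' lp ∨ superdiv lp' lp)}.Finite :=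
  topReduced_SGB_finite_general mle sle hmlin hmadd compat f
end
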